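/- arXiv:1504.00836 — 3 statements merged into one kernel-verified Lean document; each statement's English description precedes it below -/
import Mathlib

section
/- Let \mathfrak{U} be an essential ultrafilter on \mathbb{R}^n (a filter containing no Lebesgue-null sets, closed under Lebesgue-a.e. equivalence of sets, and maximal among such filters). Then for every set A ⊆ \mathbb{R}^n, either A ∈ \mathfrak{U} or its complement \mathbb{R}^n \ A ∈ \mathfrak{U}. -/
open MeasureTheory Filter

/-- A filter on `ℝⁿ` is *essential* if it contains no Lebesgue-null sets and is closed
under modification by null symmetric differences (w.r.t. outer Lebesgue measure). -/
def IsEssentialFilter {n : ℕ} (F : Filter (EuclideanSpace ℝ (Fin n))) : Prop :=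
  (∀ A ∈ F, volume A ≠ 0) ∧
  ∀ A ∈ F, ∀ B : Set (EuclideanSpace ℝ (Fin n)), volume (symmDiff A B) = 0 → B ∈ F

/-- An *essential ultrafilter* is a maximal essential filter (maximal with respect to
inclusion of filters, i.e. minimal in the filter order of Mathlib). -/
def IsEssentialUltrafilter {n : ℕ} (U : Filter (EuclideanSpace ℝ (Fin n))) : Prop :=
  IsEssentialFilter U ∧ ∀ F : Filter (EuclideanSpace ℝ (Fin n)),
    IsEssentialFilter F → F ≤ U → F = U

lemma essential_aux {n : ℕ} (U : Filter (EuclideanSpace ℝ (Fin n)))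
    (hU : IsEssentialUltrafilter U) (A : Set (EuclideanSpace ℝ (Fin n)))
    (h : ∀ S ∈ U, volume (S ∩ A) ≠ 0) : A ∈ U := by
  set F : Filter (EuclideanSpace ℝ (Fin n)) :=
    { sets := {B | ∃ S ∈ U, volume ((S ∩ A) \ B) = 0}
      univ_sets := ⟨Set.univ, univ_mem, by simp⟩
      sets_of_superset := by
        rintro B C ⟨S, hS, h0⟩ hBC
        exact ⟨S, hS, measure_mono_null (Set.diff_subset_diff_right hBC) h0⟩
      inter_sets := by
        rintro B C ⟨S₁, hS₁, h₁⟩ ⟨S₂, hS₂, h₂⟩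
        refine ⟨S₁ ∩ S₂, inter_mem hS₁ hS₂, measure_mono_null ?_
          (measure_union_null h₁ h₂)⟩
        intro x hx
        simp only [Set.mem_diff, Set.mem_inter_iff, Set.mem_union] at hx ⊢
        tauto } with hF
  have hFle : F ≤ U := by
    intro S hS
    exact ⟨S, hS, by rw [Set.diff_eq_empty.mpr Set.inter_subset_left]; exact measure_empty⟩
  have hFess : IsEssentialFilter F := by
    constructor
    · rintro B ⟨S, hS, h0⟩ hB0
      apply h S hS
      have := measure_le_inter_add_diff volume (S ∩ A) B
      have h2 : volume ((S ∩ A) ∩ B) = 0 :=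
        measure_mono_null Set.inter_subset_right hB0
      rw [h0, h2] at this
      simpa using this
    · rintro B ⟨S, hS, h0⟩ C hBC
      have hBCnull : volume (B \ C) = 0 :=
        measure_mono_null (fun x hx => by
          simp only [Set.mem_symmDiff, Set.mem_diff] at hx ⊢; tauto) hBC
      refine ⟨S, hS, measure_mono_null (t := ((S ∩ A) \ B) ∪ (B \ C)) ?_
        (measure_union_null h0 hBCnull)⟩
      intro x hx
      simp only [Set.mem_diff, Set.mem_union] at hx ⊢
      tauto
  have hEq : F = U := hU.2 F hFess hFle
  have hA : A ∈ F := ⟨Set.univ, univ_mem, by simp⟩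
  rwa [hEq] at hA

/-- Lemma 7.1: for an essential ultrafilter `U` and any set `A`, either `A ∈ U`
or its complement belongs to `U`. -/
theorem essentialUltrafilter_mem_or_compl_mem {n : ℕ}
    (U : Filter (EuclideanSpace ℝ (Fin n))) (hU : IsEssentialUltrafilter U)
    (A : Set (EuclideanSpace ℝ (Fin n))) :
    A ∈ U ∨ Aᶜ ∈ U := by
  by_cases h : ∀ S ∈ U, volume (S ∩ A) ≠ 0
  · exact Or.inl (essential_aux U hU A h)
  · push_neg at h
    obtain ⟨S₀, hS₀, h₀⟩ := h
    refine Or.inr (essential_aux U hU Aᶜ fun S hS hc => ?_)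
    apply hU.1.1 (S ∩ S₀) (inter_mem hS hS₀)
    refine measure_mono_null ?_ (measure_union_null hc h₀)
    intro x hx
    simp only [Set.mem_inter_iff, Set.mem_union, Set.mem_compl_iff] at hx ⊢
    tauto
end

section
/- Every essential ultrafilter on \mathbb{R}^n is an ultrafilter, i.e., a maximal element among all filters on \mathbb{R}^n. -/
open MeasureTheory Filter

/-!
If `s ∉ U` for an essential ultrafilter `U`, then `U ⊓ 𝓟 s` cannot be essential, so some `S ∈ U`
meets `s` in a null set; removing that null set keeps `S` in `U` and puts `S \ s ⊆ sᶜ` in `U`.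
Since `U` contains no null sets it is proper, so exactly one of `s`, `sᶜ` lies in `U`.
-/

namespace IsEssentialFilter

variable {n : ℕ} {F : Filter (EuclideanSpace ℝ (Fin n))}

theorem neBot (hF : IsEssentialFilter F) : F.NeBot :=
  ⟨fun hbot => hF.1 ∅ (hbot ▸ mem_bot) measure_empty⟩

theorem diff_mem (hF : IsEssentialFilter F) {A N : Set (EuclideanSpace ℝ (Fin n))} (hA : A ∈ F)
    (hN : volume (A ∩ N) = 0) : A \ N ∈ F := by
  refine hF.2 A hA _ ?_
  have : symmDiff A (A \ N) = A ∩ N := by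
    ext x
    simp only [Set.mem_symmDiff, Set.mem_sdiff, Set.mem_inter_iff]
    tauto
  rwa [this]

theorem inf_principal {A : Set (EuclideanSpace ℝ (Fin n))} (hF : IsEssentialFilter F)
    (hA : ∀ S ∈ F, volume (S ∩ A) ≠ 0) : IsEssentialFilter (F ⊓ 𝓟 A) := by
  refine ⟨fun B hB hB0 => ?_, fun B hB C hBC => ?_⟩
  · exact hA _ (mem_inf_principal.mp hB) (measure_mono_null (fun x hx => hx.1 hx.2) hB0)
  · rw [mem_inf_principal] at hB ⊢
    have hnull : volume ({x | x ∈ A → x ∈ B} ∩ (B \ C)) = 0 :=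
      measure_mono_null (fun x hx => Or.inl hx.2) hBC
    filter_upwards [hF.diff_mem hB hnull] with x hx hxA
    by_contra hxC
    exact hx.2 ⟨hx.1 hxA, hxC⟩

end IsEssentialFilter

namespace IsEssentialUltrafilter

variable {n : ℕ} {U : Filter (EuclideanSpace ℝ (Fin n))}

theorem exists_inter_null_of_notMem (hU : IsEssentialUltrafilter U)
    {s : Set (EuclideanSpace ℝ (Fin n))} (hs : s ∉ U) : ∃ S ∈ U, volume (S ∩ s) = 0 := by
  by_contra! h
  have hUs := hU.2 _ (hU.1.inf_principal h) inf_le_left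
  exact hs (hUs ▸ mem_inf_of_right (mem_principal_self s))

theorem compl_mem_of_notMem (hU : IsEssentialUltrafilter U)
    {s : Set (EuclideanSpace ℝ (Fin n))} (hs : s ∉ U) : sᶜ ∈ U := by
  obtain ⟨S, hS, hSs⟩ := hU.exists_inter_null_of_notMem hs
  exact mem_of_superset (hU.1.diff_mem hS hSs) fun x hx => hx.2

end IsEssentialUltrafilter

/-- Corollary 7.1: any essential ultrafilter on `ℝⁿ` is an ultrafilter, i.e. a maximal
element among all (proper) filters. -/
theorem essentialUltrafilter_isUltrafilter {n : ℕ}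
    (U : Filter (EuclideanSpace ℝ (Fin n))) (hU : IsEssentialUltrafilter U) :
    ∃ V : Ultrafilter (EuclideanSpace ℝ (Fin n)), (V : Filter (EuclideanSpace ℝ (Fin n))) = U := by
  have := hU.1.neBot
  refine ⟨Ultrafilter.ofComplNotMemIff U fun s => ⟨fun hsc => ?_, compl_notMem⟩, rfl⟩
  by_contra hs
  exact hsc (hU.compl_mem_of_notMem hs)
end

section
/- Let C be a dissipative operator and A a skew-symmetric operator on a real Hilbert space H with C ⊆ A* and −A ⊆ A*, and suppose Cx = −Ax for all x ∈ D(C) ∩ D(A). Define \tilde{C} on D(C) + D(A) by \tilde{C}(u + v) = Cu − Av for u ∈ D(C), v ∈ D(A). Then \tilde{C} is well-defined and dissipative: (\tilde{C}w, w) ≤ 0 for all w ∈ D(\tilde{C}). -/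
/-!
Writing `w = u + v` with `u ∈ D(C)`, `v ∈ D(A)`: well-definedness holds because
`u₁ - u₂ = v₂ - v₁` lies in `D(C) ∩ D(A)`, where `C = -A`. For dissipativity, expand
`⟪Cu - Av, u + v⟫`: the term `⟪Av, v⟫` vanishes by skew-symmetry, and the cross terms
`⟪Cu, v⟫ - ⟪Av, u⟫` cancel because `C ⊆ A*`, leaving `⟪Cu, u⟫ ≤ 0`.
-/

namespace LinearPMap

theorem IsFormalAdjoint.of_le {𝕜 E F : Type*} [RCLike 𝕜] [NormedAddCommGroup E]
    [InnerProductSpace 𝕜 E] [NormedAddCommGroup F] [InnerProductSpace 𝕜 F]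
    {T T' : E →ₗ.[𝕜] F} {S : F →ₗ.[𝕜] E} (h : T.IsFormalAdjoint S) (hle : T' ≤ T) :
    T'.IsFormalAdjoint S := by
  intro x y
  obtain ⟨x', hx', hTx⟩ := exists_of_le hle x
  rw [hTx, hx', h x' y]

theorem map_sub_eq_map_sub_of_add_eq {R E F : Type*} [Ring R] [AddCommGroup E] [Module R E]
    [AddCommGroup F] [Module R F] {f g : E →ₗ.[R] F}
    (hagree : ∀ (u : f.domain) (v : g.domain), (u : E) = (v : E) → f u = - g v)
    {u₁ u₂ : f.domain} {v₁ v₂ : g.domain} (h : (u₁ : E) + v₁ = u₂ + v₂) :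
    f u₁ - g v₁ = f u₂ - g v₂ := by
  have hdiff : ((u₁ - u₂ : f.domain) : E) = ((v₂ - v₁ : g.domain) : E) := by
    push_cast
    linear_combination (norm := abel) h
  have := hagree (u₁ - u₂) (v₂ - v₁) hdiff
  rw [f.map_sub, g.map_sub] at this
  linear_combination (norm := abel) this

theorem inner_map_self_eq_zero_of_skew {E : Type*} [NormedAddCommGroup E]
    [InnerProductSpace ℝ E] {A : E →ₗ.[ℝ] E}
    (hskew : ∀ v w : A.domain, (inner ℝ (A v) (w : E) : ℝ) = - inner ℝ (v : E) (A w))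
    (v : A.domain) : (inner ℝ (A v) (v : E) : ℝ) = 0 := by
  have := hskew v v
  rw [real_inner_comm (A v : E)] at this
  linarith

end LinearPMap

/-- If `C` is dissipative, `A` is skew-symmetric with dense domain, `C ⊆ A*`, and
`C = −A` on `D(C) ∩ D(A)`, then the operator `C̃(u + v) = Cu − Av` on `D(C) + D(A)`
is well-defined and dissipative. -/
theorem extension_well_defined_and_dissipative {H : Type*} [NormedAddCommGroup H]
    [InnerProductSpace ℝ H] [CompleteSpace H]
    (C A : H →ₗ.[ℝ] H)
    (hdense : Dense (A.domain : Set H))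
    (hdiss : ∀ u : C.domain, (inner ℝ (C u) (u : H) : ℝ) ≤ 0)
    (hCA : C ≤ A.adjoint)
    (hskew : ∀ v w : A.domain, (inner ℝ (A v) (w : H) : ℝ) = - inner ℝ (v : H) (A w))
    (hagree : ∀ (u : C.domain) (v : A.domain), (u : H) = (v : H) → C u = - A v) :
    (∀ (u₁ u₂ : C.domain) (v₁ v₂ : A.domain),
        (u₁ : H) + (v₁ : H) = (u₂ : H) + (v₂ : H) → C u₁ - A v₁ = C u₂ - A v₂) ∧
    (∀ (u : C.domain) (v : A.domain), (inner ℝ (C u - A v) ((u : H) + (v : H)) : ℝ) ≤ 0) := by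
  refine ⟨fun _ _ _ _ h ↦ LinearPMap.map_sub_eq_map_sub_of_add_eq hagree h, fun u v ↦ ?_⟩
  have hcross : inner ℝ (C u) (v : H) = inner ℝ (u : H) (A v) :=
    (A.adjoint_isFormalAdjoint hdense).of_le hCA u v
  calc inner ℝ (C u - A v) ((u : H) + v)
      = inner ℝ (C u) (u : H) + (inner ℝ (C u) (v : H) - inner ℝ (u : H) (A v))
          - inner ℝ (A v) (v : H) := by
        rw [inner_sub_left, inner_add_right, inner_add_right, real_inner_comm (A v : H) u]
        ring
    _ = inner ℝ (C u) (u : H) := by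
        rw [hcross, LinearPMap.inner_map_self_eq_zero_of_skew hskew v]
        ring
    _ ≤ 0 := hdiss u
end
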